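/- Let H be a strongly connected simple digraph with at least one arc, let k be a positive integer, and assume that every tournament not containing k arc-disjoint immersion copies of H admits a vertex ordering of width at most c*k^2 (for a constant c depending on H). Then, for every tournament T that does not contain k arc-disjoint immersion copies of H, there exists a set of at most 6*c*k^2 arcs of T that intersects every immersion copy of H in T. -/

import Mathlib

/-!
Induct on `k`, splitting it as `k₁ + k₂` with `k₁ = ⌈k/2⌉`, `k₂ = ⌊k/2⌋`. If `T` has no `k₁`
arc-disjoint copies, induction applies to `T` itself. Otherwise take an ordering `σ` of width at
most `c k²` and the least position `α` such that the vertices up to `α` carry `k₁` copies. Then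
the vertices before `α` carry no `k₁` copies, and those after `α` no `k₂` copies (else `T` would
carry `k`). Induction on the two induced sub-tournaments gives hitting sets `F₁`, `F₂`; add the
backward arcs over the cuts just before and just after `α`. Being strongly connected, a copy
avoiding all of them cannot cross either cut, and it cannot sit at the single position `α` as
it has an arc; so it lies entirely before or after `α`, where `F₁` or `F₂` meets it. The total is `6c⌈k/2⌉² + 6c⌊k/2⌋² + 2ck² ≤ 6ck²`.
-/

/-- `A` is the arc relation of a tournament on `V`. -/
def IsTournament {V : Type} (A : V → V → Prop) : Prop :=
  (∀ v, ¬ A v v) ∧ ∀ u v, u ≠ v → (A u v ↔ ¬ A v u)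

/-- `l` is a nonempty directed walk (as a list of arcs) from `a` to `b` in the digraph `A`. -/
def IsArcWalk {V : Type} (A : V → V → Prop) (l : List (V × V)) (a b : V) : Prop :=
  l ≠ [] ∧ (∀ e ∈ l, A e.1 e.2) ∧ List.Chain' (fun e f => e.2 = f.1) l ∧
    l.head?.map Prod.fst = some a ∧ l.getLast?.map Prod.snd = some b

/-- `φ` (on vertices) together with arc-lists `P` (paths for the arcs of `H`) form an
immersion copy of the digraph `H` inside the digraph `A`: vertices map injectively, each
arc of `H` maps to a directed path (a walk without repeated arcs) between the images of its
endpoints, and these paths are pairwise arc-disjoint. -/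
def IsImmersionCopy {W V : Type} (H : W → W → Prop) (A : V → V → Prop)
    (φ : W → V) (P : W → W → List (V × V)) : Prop :=
  Function.Injective φ ∧
  (∀ u v, H u v → IsArcWalk A (P u v) (φ u) (φ v)) ∧
  (∀ u v, H u v → (P u v).Nodup) ∧
  (∀ u v, ¬ H u v → P u v = []) ∧
  (∀ u v u' v', H u v → H u' v' → (u, v) ≠ (u', v') →
    ∀ e, e ∈ P u v → e ∉ P u' v')

/-- The arcs of an immersion copy: all arcs used by the paths. -/
def copyArcs {W V : Type} (P : W → W → List (V × V)) : Set (V × V) :=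
  {e | ∃ u v, e ∈ P u v}

/-- The vertices of an immersion copy: the images of vertices together with all
endpoints of arcs used by the paths. -/
def copyVerts {W V : Type} (φ : W → V) (P : W → W → List (V × V)) : Set V :=
  Set.range φ ∪ {x | ∃ e ∈ copyArcs P, x = e.1 ∨ x = e.2}

/-- The arcs of `A` crossing backwards over position `α` of the ordering `σ`
(`σ` is 0-based: these are the arcs `(u,v)` with `σ v ≤ α < σ u`). -/
def cutSet {V : Type} (A : V → V → Prop) {n : ℕ} (σ : V ≃ Fin n) (α : ℕ) : Set (V × V) :=
  {e | A e.1 e.2 ∧ (σ e.2 : ℕ) ≤ α ∧ α < (σ e.1 : ℕ)}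

/-- The digraph with arc relation `A` contains `k` pairwise arc-disjoint immersion copies
of `H`. -/
def HasImmPacking {W V : Type} (H : W → W → Prop) (A : V → V → Prop) (k : ℕ) : Prop :=
  ∃ (φs : Fin k → W → V) (Ps : Fin k → W → W → List (V × V)),
    (∀ t, IsImmersionCopy H A (φs t) (Ps t)) ∧
    ∀ t t', t ≠ t' → Disjoint (copyArcs (Ps t)) (copyArcs (Ps t'))

open Relation Function

variable {W V V' : Type}

def deleteArcs (A : V → V → Prop) (F : Set (V × V)) : V → V → Prop :=
  fun a b => A a b ∧ (a, b) ∉ F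

theorem deleteArcs_anti {A : V → V → Prop} {F F' : Set (V × V)} (h : F ⊆ F') (a b : V) :
    deleteArcs A F' a b → deleteArcs A F a b :=
  fun hab => ⟨hab.1, fun hF => hab.2 (h hF)⟩

def HasImmPackingIn (H : W → W → Prop) (A : V → V → Prop) (S : Set V) (k : ℕ) : Prop :=
  ∃ (φs : Fin k → W → V) (Ps : Fin k → W → W → List (V × V)),
    (∀ t, IsImmersionCopy H A (φs t) (Ps t) ∧ copyVerts (φs t) (Ps t) ⊆ S) ∧
    ∀ t t', t ≠ t' → Disjoint (copyArcs (Ps t)) (copyArcs (Ps t'))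

def WidthBound (H : W → W → Prop) (k w : ℕ) : Prop :=
  ∀ n (T : Fin n → Fin n → Prop), IsTournament T → ¬ HasImmPacking H T k →
    ∃ σ : Fin n ≃ Fin n, ∀ α : ℕ, (cutSet T σ α).ncard ≤ w

def ArcHittingBound (H : W → W → Prop) (k B : ℕ) : Prop :=
  ∀ n (T : Fin n → Fin n → Prop), IsTournament T → ¬ HasImmPacking H T k →
    ∃ F : Set (Fin n × Fin n), F ⊆ {e | T e.1 e.2} ∧ F.ncard ≤ B ∧
      ∀ φ P, ¬ IsImmersionCopy H (deleteArcs T F) φ P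

theorem IsTournament.comap {T : V → V → Prop} (hT : IsTournament T) {f : V' → V}
    (hf : Injective f) : IsTournament fun a b => T (f a) (f b) :=
  ⟨fun v => hT.1 (f v), fun _ _ huv => hT.2 _ _ (hf.ne huv)⟩

namespace IsArcWalk

variable {A A' : V → V → Prop} {l : List (V × V)} {a b : V}

theorem mono (h : ∀ x y, A x y → A' x y) (hl : IsArcWalk A l a b) : IsArcWalk A' l a b :=
  ⟨hl.1, fun e he => h _ _ (hl.2.1 e he), hl.2.2⟩

theorem reflTransGen_of_mem : ∀ {l : List (V × V)} {a b : V}, IsArcWalk A l a b → ∀ e ∈ l,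
    ReflTransGen A a e.1 ∧ ReflTransGen A e.2 b
  | [], _, _, hl, _, _ => absurd rfl hl.1
  | [x], _, _, ⟨_, _, _, ha, hb⟩, e, he => by
    simp only [List.head?_cons, List.getLast?_singleton, Option.map_some,
      Option.some.injEq] at ha hb
    rw [List.mem_singleton.mp he, ha, hb]
    exact ⟨.refl, .refl⟩
  | x :: y :: t, _, b, ⟨_, hA, hc, ha, hb⟩, e, he => by
    simp only [List.head?_cons, Option.map_some, Option.some.injEq] at ha
    subst ha
    have hxy := List.isChain_cons_cons.mp hc
    have hy : IsArcWalk A (y :: t) x.2 b :=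
      ⟨List.cons_ne_nil _ _, fun e he => hA e (List.mem_cons_of_mem _ he), hxy.2,
        by simp [hxy.1], by simpa using hb⟩
    have hx := hA x List.mem_cons_self
    rcases List.mem_cons.mp he with rfl | he
    · have hyb := (reflTransGen_of_mem hy y List.mem_cons_self).2
      exact ⟨.refl, hxy.1 ▸ hyb.head (hA y (by simp))⟩
    · obtain ⟨h₁, h₂⟩ := reflTransGen_of_mem hy e he
      exact ⟨h₁.head hx, h₂⟩

theorem reflTransGen (hl : IsArcWalk A l a b) : ReflTransGen A a b := by
  obtain ⟨e, he⟩ := List.exists_mem_of_ne_nil _ hl.1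
  obtain ⟨h₁, h₂⟩ := hl.reflTransGen_of_mem e he
  exact (h₁.tail (hl.2.1 e he)).trans h₂

end IsArcWalk

theorem IsArcWalk.map {A : V → V → Prop} {A' : V' → V' → Prop} {l : List (V × V)} {a b : V}
    {f : V → V'} (hl : IsArcWalk A l a b) (hf : ∀ e ∈ l, A' (f e.1) (f e.2)) :
    IsArcWalk A' (l.map (Prod.map f f)) (f a) (f b) := by
  obtain ⟨hne, -, hc, ha, hb⟩ := hl
  refine ⟨by simpa using hne, fun e he => ?_, ?_, ?_, ?_⟩
  · obtain ⟨a, ha, rfl⟩ := List.mem_map.mp he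
    exact hf a ha
  · exact (List.isChain_map _).2 (hc.imp fun e e' h => by simp [h])
  · obtain ⟨e, he, rfl⟩ := Option.map_eq_some_iff.mp ha
    simp [he]
  · obtain ⟨e, he, rfl⟩ := Option.map_eq_some_iff.mp hb
    simp [he]

theorem mem_copyVerts_fst {φ : W → V} {P : W → W → List (V × V)} {e : V × V}
    (he : e ∈ copyArcs P) : e.1 ∈ copyVerts φ P :=
  Or.inr ⟨e, he, Or.inl rfl⟩

theorem mem_copyVerts_snd {φ : W → V} {P : W → W → List (V × V)} {e : V × V}
    (he : e ∈ copyArcs P) : e.2 ∈ copyVerts φ P :=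
  Or.inr ⟨e, he, Or.inr rfl⟩

theorem apply_mem_copyVerts {φ : W → V} (P : W → W → List (V × V)) (w : W) :
    φ w ∈ copyVerts φ P :=
  Or.inl ⟨w, rfl⟩

theorem copyArcs_map (P : W → W → List (V × V)) (g : V × V → V' × V') :
    copyArcs (fun u v => (P u v).map g) = g '' copyArcs P := by
  ext e
  simp only [copyArcs, List.mem_map, Set.mem_image, Set.mem_ofPred_eq]
  constructor
  · rintro ⟨u, v, a, ha, rfl⟩
    exact ⟨a, ⟨u, v, ha⟩, rfl⟩
  · rintro ⟨a, ⟨u, v, ha⟩, rfl⟩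
    exact ⟨u, v, a, ha, rfl⟩

theorem copyVerts_map_subset (φ : W → V) (P : W → W → List (V × V)) (f : V → V') :
    copyVerts (f ∘ φ) (fun u v => (P u v).map (Prod.map f f)) ⊆ f '' copyVerts φ P := by
  rintro x (⟨w, rfl⟩ | ⟨e, he, hxe⟩)
  · exact ⟨φ w, apply_mem_copyVerts P w, rfl⟩
  · rw [copyArcs_map] at he
    obtain ⟨a, ha, rfl⟩ := he
    rcases hxe with rfl | rfl
    exacts [⟨a.1, mem_copyVerts_fst ha, rfl⟩, ⟨a.2, mem_copyVerts_snd ha, rfl⟩]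

theorem disjoint_copyArcs_of_disjoint_copyVerts {W' : Type} {φ : W → V}
    {P : W → W → List (V × V)} {φ' : W' → V} {P' : W' → W' → List (V × V)}
    (h : Disjoint (copyVerts φ P) (copyVerts φ' P')) : Disjoint (copyArcs P) (copyArcs P') :=
  Set.disjoint_left.2 fun _ he he' =>
    Set.disjoint_left.1 h (mem_copyVerts_fst he) (mem_copyVerts_fst (φ := φ') he')

namespace IsImmersionCopy

variable {H : W → W → Prop} {A A' : V → V → Prop} {φ : W → V} {P : W → W → List (V × V)}

theorem mono (h : ∀ x y, A x y → A' x y) (hc : IsImmersionCopy H A φ P) :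
    IsImmersionCopy H A' φ P :=
  ⟨hc.1, fun u v huv => (hc.2.1 u v huv).mono h, hc.2.2⟩

theorem exists_mem_of_mem_copyArcs (hc : IsImmersionCopy H A φ P) {e : V × V}
    (he : e ∈ copyArcs P) : ∃ u v, H u v ∧ e ∈ P u v := by
  obtain ⟨u, v, huv⟩ := he
  by_cases h : H u v
  · exact ⟨u, v, h, huv⟩
  · simp [hc.2.2.2.1 u v h] at huv

theorem reflTransGen_apply (hstrong : ∀ u v, ReflTransGen H u v)
    (hc : IsImmersionCopy H A φ P) (u v : W) : ReflTransGen A (φ u) (φ v) :=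
  ReflTransGen.lift' φ (fun u v huv => (hc.2.1 u v huv).reflTransGen) _ _ (hstrong u v)

theorem reflTransGen (hstrong : ∀ u v, ReflTransGen H u v) (hc : IsImmersionCopy H A φ P)
    {x y : V} (hx : x ∈ copyVerts φ P) (hy : y ∈ copyVerts φ P) : ReflTransGen A x y := by
  have reach : ∀ z ∈ copyVerts φ P,
      (∃ w, ReflTransGen A (φ w) z) ∧ ∃ w, ReflTransGen A z (φ w) := by
    rintro z (⟨w, rfl⟩ | ⟨e, he, hze⟩)
    · exact ⟨⟨w, .refl⟩, ⟨w, .refl⟩⟩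
    obtain ⟨u, v, huv, hmem⟩ := hc.exists_mem_of_mem_copyArcs he
    have hwalk := hc.2.1 u v huv
    have harc := hwalk.2.1 e hmem
    obtain ⟨h₁, h₂⟩ := hwalk.reflTransGen_of_mem e hmem
    rcases hze with rfl | rfl
    exacts [⟨⟨u, h₁⟩, ⟨v, h₂.head harc⟩⟩, ⟨⟨u, h₁.tail harc⟩, ⟨v, h₂⟩⟩]
  obtain ⟨-, w, hxw⟩ := reach x hx
  obtain ⟨⟨w', hw'y⟩, -⟩ := reach y hy
  exact hxw.trans ((hc.reflTransGen_apply hstrong w w').trans hw'y)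

theorem copyVerts_subset_or_subset (hstrong : ∀ u v, ReflTransGen H u v)
    (hc : IsImmersionCopy H A φ P) {p : V → Prop} (hp : ∀ a b, A a b → p a → p b) :
    copyVerts φ P ⊆ {v | p v} ∨ copyVerts φ P ⊆ {v | ¬ p v} := by
  refine or_iff_not_imp_right.2 fun h => ?_
  obtain ⟨x, hx, hpx⟩ := Set.not_subset.1 h
  intro y hy
  have hxy := hc.reflTransGen hstrong hx hy
  clear hy
  induction hxy with
  | refl => exact not_not.1 hpx
  | tail _ hab ih => exact hp _ _ hab ih

theorem map {f : V → V'} {A' : V' → V' → Prop} {S : Set V} (hf : Set.InjOn f S)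
    (hA : ∀ x ∈ S, ∀ y ∈ S, A x y → A' (f x) (f y)) (hc : IsImmersionCopy H A φ P)
    (hS : copyVerts φ P ⊆ S) :
    IsImmersionCopy H A' (f ∘ φ) (fun u v => (P u v).map (Prod.map f f)) := by
  obtain ⟨hφ, hwalk, hnodup, hnil, hdisj⟩ := hc
  have hmem : ∀ u v, ∀ e ∈ P u v, e ∈ S ×ˢ S := fun u v e he =>
    ⟨hS (mem_copyVerts_fst ⟨u, v, he⟩), hS (mem_copyVerts_snd ⟨u, v, he⟩)⟩
  have hinj : Set.InjOn (Prod.map f f) (S ×ˢ S) := hf.prodMap hf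
  refine ⟨fun a b hab => hφ (hf (hS (apply_mem_copyVerts P a)) (hS (apply_mem_copyVerts P b))
    hab), fun u v huv => (hwalk u v huv).map fun e he => ?_, fun u v huv => ?_,
    fun u v huv => by simp [hnil u v huv], ?_⟩
  · exact hA _ (hmem u v e he).1 _ (hmem u v e he).2 ((hwalk u v huv).2.1 e he)
  · exact (hnodup u v huv).map_on fun a ha b hb hab => hinj (hmem u v a ha) (hmem u v b hb) hab
  · intro u v u' v' huv huv' hne e he he'
    obtain ⟨a, ha, rfl⟩ := List.mem_map.mp he
    obtain ⟨b, hb, hba⟩ := List.mem_map.mp he'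
    rw [← hinj (hmem u' v' b hb) (hmem u v a ha) hba] at ha
    exact hdisj u v u' v' huv huv' hne b ha hb

end IsImmersionCopy

section Packing

variable {H : W → W → Prop} {A : V → V → Prop} {k k₁ k₂ : ℕ}

theorem HasImmPackingIn.mono {S S' : Set V} (h : HasImmPackingIn H A S k) (hS : S ⊆ S') :
    HasImmPackingIn H A S' k :=
  let ⟨φs, Ps, hc, hd⟩ := h
  ⟨φs, Ps, fun t => ⟨(hc t).1, (hc t).2.trans hS⟩, hd⟩

theorem HasImmPacking.hasImmPackingIn {S : Set V} (h : HasImmPacking H A k) (hS : ∀ v, v ∈ S) :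
    HasImmPackingIn H A S k :=
  let ⟨φs, Ps, hc, hd⟩ := h
  ⟨φs, Ps, fun t => ⟨hc t, fun v _ => hS v⟩, hd⟩

theorem HasImmPacking.map {A' : V' → V' → Prop} {f : V → V'} (hf : Injective f)
    (hA : ∀ x y, A x y → A' (f x) (f y)) (h : HasImmPacking H A k) :
    HasImmPackingIn H A' (Set.range f) k := by
  obtain ⟨φs, Ps, hc, hd⟩ := h
  refine ⟨fun t => f ∘ φs t, fun t u v => (Ps t u v).map (Prod.map f f), fun t => ⟨?_, ?_⟩,
    fun t t' htt' => ?_⟩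
  · exact (hc t).map hf.injOn (fun x _ y _ => hA x y) (Set.subset_univ _)
  · exact (copyVerts_map_subset _ _ f).trans (Set.image_subset_range _ _)
  · rw [copyArcs_map, copyArcs_map, Set.disjoint_image_iff (hf.prodMap hf)]
    exact hd t t' htt'

theorem not_hasImmPackingIn_empty [Nonempty W] (hk : k ≠ 0) : ¬ HasImmPackingIn H A ∅ k := by
  rintro ⟨φs, Ps, hc, -⟩
  exact (hc ⟨0, Nat.pos_of_ne_zero hk⟩).2 (apply_mem_copyVerts _ (Classical.arbitrary W))

theorem HasImmPackingIn.add {S₁ S₂ : Set V} (hS : Disjoint S₁ S₂)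
    (h₁ : HasImmPackingIn H A S₁ k₁) (h₂ : HasImmPackingIn H A S₂ k₂) :
    HasImmPacking H A (k₁ + k₂) := by
  obtain ⟨φs₁, Ps₁, hc₁, hd₁⟩ := h₁
  obtain ⟨φs₂, Ps₂, hc₂, hd₂⟩ := h₂
  have hd₁₂ : ∀ i j, Disjoint (copyArcs (Ps₁ i)) (copyArcs (Ps₂ j)) := fun i j =>
    disjoint_copyArcs_of_disjoint_copyVerts (hS.mono (hc₁ i).2 (hc₂ j).2)
  refine ⟨Fin.append φs₁ φs₂, Fin.append Ps₁ Ps₂, fun t => ?_, fun t t' htt' => ?_⟩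
  · induction t using Fin.addCases <;> simp [(hc₁ _).1, (hc₂ _).1]
  · induction t using Fin.addCases <;> induction t' using Fin.addCases <;>
      simp only [Fin.append_left, Fin.append_right]
    · exact hd₁ _ _ (ne_of_apply_ne _ htt')
    · exact hd₁₂ _ _
    · exact (hd₁₂ _ _).symm
    · exact hd₂ _ _ (ne_of_apply_ne _ htt')

theorem exists_balanced_split {n : ℕ} (σ : V ≃ Fin n) (h₀ : ¬ HasImmPackingIn H A ∅ k₁)
    (h₁ : HasImmPacking H A k₁) (hk : ¬ HasImmPacking H A (k₁ + k₂)) :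
    ∃ α : ℕ, ¬ HasImmPackingIn H A {v | (σ v : ℕ) < α} k₁ ∧
      ¬ HasImmPackingIn H A {v | α < (σ v : ℕ)} k₂ := by
  classical
  have hex : ∃ β, HasImmPackingIn H A {v | (σ v : ℕ) < β} k₁ :=
    ⟨n, h₁.hasImmPackingIn fun v => (σ v).2⟩
  have hβ := Nat.find_spec hex
  have hβ₀ : Nat.find hex ≠ 0 := fun h => h₀ (by simpa [h] using hβ)
  refine ⟨Nat.find hex - 1, Nat.find_min hex (by omega), fun h₂ => hk (hβ.add ?_ h₂)⟩
  exact Set.disjoint_left.2 fun v hv₁ hv₂ => by simp only [Set.mem_ofPred_eq] at hv₁ hv₂; omega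

end Packing

namespace ArcHittingBound

variable {H : W → W → Prop} {k B : ℕ}

theorem mono (h : ArcHittingBound H k B) {B' : ℕ} (hB : B ≤ B') : ArcHittingBound H k B' :=
  fun n T hT hk =>
    let ⟨F, hFT, hF, hhit⟩ := h n T hT hk
    ⟨F, hFT, hF.trans hB, hhit⟩

theorem one : ArcHittingBound H 1 0 := fun _ _ _ hk =>
  ⟨∅, Set.empty_subset _, by simp, fun φ P hc =>
    hk ⟨fun _ => φ, fun _ => P, fun _ => hc.mono fun _ _ h => h.1,
      fun t t' h => absurd (Subsingleton.elim t t') h⟩⟩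

theorem exists_of_not_hasImmPackingIn [Nonempty W] (h : ArcHittingBound H k B) {n : ℕ}
    {T : Fin n → Fin n → Prop} (hT : IsTournament T) {S : Set (Fin n)}
    (hS : ¬ HasImmPackingIn H T S k) :
    ∃ F : Set (Fin n × Fin n), F ⊆ {e | T e.1 e.2} ∧ F.ncard ≤ B ∧
      ∀ φ P, copyVerts φ P ⊆ S → ¬ IsImmersionCopy H (deleteArcs T F) φ P := by
  set ι : Fin (Nat.card S) → Fin n := Subtype.val ∘ (Finite.equivFin S).symm
  have hι : Injective ι := Subtype.val_injective.comp (Finite.equivFin S).symm.injective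
  have hrange : Set.range ι = S := by
    rw [Set.range_comp, Equiv.range_eq_univ, Set.image_univ, Subtype.range_coe]
  obtain ⟨F', hF'T, hF', hhit⟩ := h _ (fun a b => T (ι a) (ι b)) (hT.comap hι)
    fun hp => hS (hrange ▸ hp.map hι fun _ _ => id)
  refine ⟨Prod.map ι ι '' F', fun _ ⟨e, he, hee⟩ => hee ▸ hF'T he,
    (Set.ncard_image_le (Set.toFinite _)).trans hF', fun φ P hPS hc => ?_⟩
  have : Nonempty (Fin (Nat.card S)) :=
    ⟨(Finite.equivFin S) ⟨_, hPS (apply_mem_copyVerts P (Classical.arbitrary W))⟩⟩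
  have hinv : ∀ x ∈ S, ι (invFun ι x) = x := fun x hx =>
    invFun_eq (by rwa [hrange] : x ∈ Set.range ι)
  refine hhit _ _ (hc.map (f := invFun ι) (fun x hx y hy hxy => ?_) (fun x hx y hy hxy => ?_) hPS)
  · rw [← hinv x hx, ← hinv y hy, hxy]
  · refine ⟨?_, fun hF => hxy.2 ⟨_, hF, Prod.ext (hinv x hx) (hinv y hy)⟩⟩
    show T (ι _) (ι _)
    rw [hinv x hx, hinv y hy]
    exact hxy.1

end ArcHittingBound

theorem IsImmersionCopy.copyVerts_subset_lt_or_subset_gt {H : W → W → Prop} {T : V → V → Prop}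
    {φ : W → V} {P : W → W → List (V × V)} {n : ℕ} (hsimple : ∀ v, ¬ H v v)
    (hstrong : ∀ u v, ReflTransGen H u v) (harc : ∃ u v, H u v) (σ : V ≃ Fin n) (α : ℕ)
    (hc : IsImmersionCopy H (deleteArcs T (cutSet T σ (α - 1) ∪ cutSet T σ α)) φ P) :
    copyVerts φ P ⊆ {v | (σ v : ℕ) < α} ∨ copyVerts φ P ⊆ {v | α < (σ v : ℕ)} := by
  have hleft := hc.copyVerts_subset_or_subset hstrong (p := fun x => α ≤ (σ x : ℕ))
    fun a b hab ha => by_contra fun hb => hab.2 (Or.inl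
      ⟨hab.1, show (σ b : ℕ) ≤ α - 1 by omega, show α - 1 < (σ a : ℕ) by omega⟩)
  have hright := hc.copyVerts_subset_or_subset hstrong (p := fun x => α < (σ x : ℕ))
    fun a b hab ha => by_contra fun hb => hab.2 (Or.inr ⟨hab.1, show (σ b : ℕ) ≤ α by omega, ha⟩)
  rcases hright with hgt | hle
  · exact Or.inr hgt
  rcases hleft with hge | hlt
  · obtain ⟨u, v, huv⟩ := harc
    have hu := And.intro (hle (apply_mem_copyVerts P u)) (hge (apply_mem_copyVerts P u))
    have hv := And.intro (hle (apply_mem_copyVerts P v)) (hge (apply_mem_copyVerts P v))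
    simp only [Set.mem_ofPred_eq] at hu hv
    have : φ u = φ v := σ.injective (Fin.ext (by omega))
    exact absurd (hc.1 this ▸ huv) (hsimple u)
  · exact Or.inl fun x hx => by simpa using hlt hx

theorem ArcHittingBound.add {H : W → W → Prop} {k₁ k₂ B₁ B₂ w : ℕ} (hsimple : ∀ v, ¬ H v v)
    (hstrong : ∀ u v, ReflTransGen H u v) (harc : ∃ u v, H u v) (hk₁ : k₁ ≠ 0)
    (h₁ : ArcHittingBound H k₁ B₁) (h₂ : ArcHittingBound H k₂ B₂)
    (hw : WidthBound H (k₁ + k₂) w) : ArcHittingBound H (k₁ + k₂) (B₁ + B₂ + 2 * w) := by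
  have : Nonempty W := harc.nonempty
  intro n T hT hk
  by_cases hpack : HasImmPacking H T k₁
  swap
  · exact h₁.mono (by omega) n T hT hpack
  obtain ⟨σ, hσ⟩ := hw n T hT hk
  obtain ⟨α, hS₁, hS₂⟩ := exists_balanced_split σ (not_hasImmPackingIn_empty hk₁) hpack hk
  obtain ⟨F₁, hF₁T, hF₁, hhit₁⟩ := h₁.exists_of_not_hasImmPackingIn hT hS₁
  obtain ⟨F₂, hF₂T, hF₂, hhit₂⟩ := h₂.exists_of_not_hasImmPackingIn hT hS₂
  have hC : (cutSet T σ (α - 1) ∪ cutSet T σ α).ncard ≤ 2 * w :=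
    (Set.ncard_union_le _ _).trans (by linarith [hσ (α - 1), hσ α])
  set C := cutSet T σ (α - 1) ∪ cutSet T σ α
  refine ⟨C ∪ (F₁ ∪ F₂), ?_, ?_, fun φ P hc => ?_⟩
  · exact Set.union_subset (Set.union_subset (fun e he => he.1) fun e he => he.1)
      (Set.union_subset hF₁T hF₂T)
  · have := Set.ncard_union_le C (F₁ ∪ F₂)
    have := Set.ncard_union_le F₁ F₂
    omega
  rcases (hc.mono (deleteArcs_anti Set.subset_union_left)).copyVerts_subset_lt_or_subset_gt
    hsimple hstrong harc σ α with hlt | hgt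
  · exact hhit₁ φ P hlt
      (hc.mono (deleteArcs_anti (Set.subset_union_left.trans Set.subset_union_right)))
  · exact hhit₂ φ P hgt
      (hc.mono (deleteArcs_anti (Set.subset_union_right.trans Set.subset_union_right)))

theorem three_mul_sq_add_sq_half_le {k : ℕ} (hk : 2 ≤ k) :
    3 * ((k - k / 2) ^ 2 + (k / 2) ^ 2) ≤ 2 * k ^ 2 := by
  rcases Nat.even_or_odd' k with ⟨j, rfl | rfl⟩
  · have : 2 * j / 2 = j := by omega
    rw [this, show 2 * j - j = j by omega]
    nlinarith
  · have : (2 * j + 1) / 2 = j := by omega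
    rw [this, show 2 * j + 1 - j = j + 1 by omega]
    nlinarith

theorem arcHittingBound_of_widthBound {H : W → W → Prop} {c : ℕ} (hsimple : ∀ v, ¬ H v v)
    (hstrong : ∀ u v, ReflTransGen H u v) (harc : ∃ u v, H u v)
    (hw : ∀ k, 1 ≤ k → WidthBound H k (c * k ^ 2)) :
    ∀ k, 1 ≤ k → ArcHittingBound H k (6 * c * k ^ 2) := by
  intro k hk
  induction k using Nat.strong_induction_on with
  | _ k ih =>
  obtain rfl | hk₂ : k = 1 ∨ 2 ≤ k := by omega
  · exact ArcHittingBound.one.mono (Nat.zero_le _)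
  have hsplit : k - k / 2 + k / 2 = k := Nat.sub_add_cancel (Nat.div_le_self k 2)
  have hbound := (ih (k - k / 2) (by omega) (by omega)).add hsimple hstrong harc (by omega)
    (ih (k / 2) (by omega) (by omega)) (hsplit.symm ▸ hw k hk)
  rw [hsplit] at hbound
  refine hbound.mono ?_
  nlinarith [Nat.mul_le_mul_left (2 * c) (three_mul_sq_add_sq_half_le hk₂)]

/-- Let `H` be a strongly connected simple digraph with at least one arc, and assume that
for every `k ≥ 1`, every tournament not containing `k` arc-disjoint immersion copies of
`H` admits a vertex ordering of width at most `c * k²`. Then for every `k ≥ 1` and every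
tournament `T` that does not contain `k` arc-disjoint immersion copies of `H`, there is a
set of at most `6 c k²` arcs of `T` intersecting every immersion copy of `H` in `T`. -/
theorem stmt19 {m : ℕ} (H : Fin m → Fin m → Prop)
    (hsimple : ∀ v, ¬ H v v)
    (hstrong : ∀ u v, Relation.ReflTransGen H u v)
    (harc : ∃ u v, H u v)
    (c : ℕ)
    (hhyp : ∀ (k : ℕ), 1 ≤ k → ∀ (n : ℕ) (T : Fin n → Fin n → Prop),
      IsTournament T → ¬ HasImmPacking H T k →
      ∃ σ : Fin n ≃ Fin n, ∀ α : ℕ, (cutSet T σ α).ncard ≤ c * k ^ 2)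
    (k : ℕ) (hk : 1 ≤ k)
    (n : ℕ) (T : Fin n → Fin n → Prop) (hT : IsTournament T)
    (hnopack : ¬ HasImmPacking H T k) :
    ∃ F : Set (Fin n × Fin n), F ⊆ {e | T e.1 e.2} ∧ F.ncard ≤ 6 * c * k ^ 2 ∧
      ∀ (φ : Fin m → Fin n) (P : Fin m → Fin m → List (Fin n × Fin n)),
        ¬ IsImmersionCopy H (fun a b => T a b ∧ (a, b) ∉ F) φ P :=
  arcHittingBound_of_widthBound hsimple hstrong harc hhyp k hk n T hT hnopack
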